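/- Let x : [0,T] → ℝ^n be Lipschitz continuous, and let v : [0,T] → ℝ^n be any function such that x is differentiable at almost every t ∈ [0,T] with derivative v(t). For m ∈ ℕ set h_m := T/2^m, t_m^i := i·h_m, and define ω_m(t) := (x(t_m^{i+1}) − x(t_m^i))/h_m for t ∈ [t_m^i, t_m^{i+1}). Then ∫_0^T ‖ω_m(t) − v(t)‖² dt → 0 as m → ∞. -/

import Mathlib

open MeasureTheory Set Filter
open scoped Topology

noncomputable section

/-- The piecewise-constant dyadic difference-quotient function of `x`:
`ω_m(t) = (x(t_m^{i+1}) - x(t_m^i))/h_m` for `t ∈ [t_m^i, t_m^{i+1})`, where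
`h_m = T/2^m` and `t_m^i = i·h_m`. -/
def dyadicDiffQuot {n : ℕ} (T : ℝ) (x : ℝ → EuclideanSpace ℝ (Fin n))
    (m : ℕ) (t : ℝ) : EuclideanSpace ℝ (Fin n) :=
  let h : ℝ := T / 2 ^ m
  let i : ℕ := ⌊t / h⌋₊
  (h)⁻¹ • (x ((i + 1) * h) - x (i * h))

variable {n : ℕ} {T : ℝ}

lemma hm_pos (hT : 0 < T) (m : ℕ) : 0 < T / 2 ^ m := by positivity

lemma dyadic_eq (x : ℝ → EuclideanSpace ℝ (Fin n)) (m : ℕ) (t : ℝ) :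
    dyadicDiffQuot T x m t =
      (T / 2 ^ m)⁻¹ • (x ((⌊t / (T / 2 ^ m)⌋₊ + 1) * (T / 2 ^ m))
        - x (⌊t / (T / 2 ^ m)⌋₊ * (T / 2 ^ m))) := rfl

lemma measurable_dyadicDiffQuot (x : ℝ → EuclideanSpace ℝ (Fin n)) (m : ℕ) :
    Measurable (dyadicDiffQuot T x m) := by
  have : dyadicDiffQuot T x m =
      (fun j : ℕ => (T / 2 ^ m)⁻¹ • (x ((j + 1) * (T / 2 ^ m)) - x (j * (T / 2 ^ m)))) ∘
        (fun t => ⌊t / (T / 2 ^ m)⌋₊) := rfl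
  rw [this]
  exact (measurable_from_top).comp (Nat.measurable_floor.comp (measurable_id.div_const _))

lemma floor_mul_le {h t : ℝ} (hh : 0 < h) (ht : 0 ≤ t) : (⌊t / h⌋₊ : ℝ) * h ≤ t := by
  rw [← le_div_iff₀ hh]
  exact_mod_cast Nat.floor_le (div_nonneg ht hh.le)

lemma lt_floor_add_one_mul {h t : ℝ} (hh : 0 < h) : t < ((⌊t / h⌋₊ : ℝ) + 1) * h := by
  rw [← div_lt_iff₀ hh]
  exact Nat.lt_floor_add_one _

lemma norm_dyadic_le {L : NNReal} {x : ℝ → EuclideanSpace ℝ (Fin n)}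
    (hT : 0 < T) (hx : LipschitzOnWith L x (Icc 0 T)) {t : ℝ} (ht : t ∈ Ico 0 T) (m : ℕ) :
    ‖dyadicDiffQuot T x m t‖ ≤ L := by
  set h : ℝ := T / 2 ^ m with hh
  have hhp : 0 < h := hm_pos hT m
  set i : ℕ := ⌊t / h⌋₊ with hi
  have hib : ((i : ℝ) + 1) * h ≤ T := by
    have h1 : (i : ℝ) + 1 ≤ 2 ^ m := by
      have : i < 2 ^ m := by
        rw [hi, Nat.floor_lt (div_nonneg ht.1 hhp.le), div_lt_iff₀ hhp, hh]
        push_cast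
        field_simp
        exact ht.2
      exact_mod_cast Nat.succ_le_of_lt this
    calc ((i : ℝ) + 1) * h ≤ 2 ^ m * h := by nlinarith
      _ = T := by rw [hh]; field_simp
  have ha0 : 0 ≤ (i : ℝ) * h := by positivity
  have haT : (i : ℝ) * h ≤ T := le_trans (by nlinarith) hib
  have key : ‖x (((i : ℝ) + 1) * h) - x ((i : ℝ) * h)‖ ≤ L * h := by
    have := hx.norm_sub_le (x := ((i : ℝ) + 1) * h) (y := (i : ℝ) * h)
      ⟨by positivity, hib⟩ ⟨ha0, haT⟩
    calc ‖x (((i : ℝ) + 1) * h) - x ((i : ℝ) * h)‖ ≤ L * ‖((i : ℝ) + 1) * h - (i : ℝ) * h‖ := this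
      _ = L * h := by rw [show ((i : ℝ) + 1) * h - (i : ℝ) * h = h by ring,
            Real.norm_of_nonneg hhp.le]
  rw [dyadic_eq, norm_smul, norm_inv, Real.norm_of_nonneg hhp.le]
  rw [inv_mul_le_iff₀ hhp]
  calc ‖x (((i : ℝ) + 1) * h) - x ((i : ℝ) * h)‖ ≤ L * h := key
    _ = h * L := by ring

lemma tendsto_dyadic {x : ℝ → EuclideanSpace ℝ (Fin n)} (hT : 0 < T)
    {t : ℝ} (ht : 0 ≤ t) {w : EuclideanSpace ℝ (Fin n)} (hw : HasDerivAt x w t) :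
    Tendsto (fun m => dyadicDiffQuot T x m t) atTop (𝓝 w) := by
  rw [Metric.tendsto_atTop]
  intro ε hε
  have hlo := hasDerivAt_iff_isLittleO.mp hw
  have h2 : (0:ℝ) < ε / 2 := by positivity
  obtain ⟨δ, hδ, hδ'⟩ := Metric.eventually_nhds_iff.mp (hlo.def h2)
  have hh0 : Tendsto (fun m : ℕ => T / 2 ^ m) atTop (𝓝 0) := by
    simpa using tendsto_const_nhds.div_atTop
      (tendsto_pow_atTop_atTop_of_one_lt (by norm_num : (1:ℝ) < 2))
  obtain ⟨N, hN⟩ := eventually_atTop.mp (hh0.eventually (gt_mem_nhds hδ))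
  refine ⟨N, fun m hm => ?_⟩
  set h : ℝ := T / 2 ^ m with hhdef
  have hhp : 0 < h := hm_pos hT m
  have hhδ : h < δ := hN m hm
  set i : ℕ := ⌊t / h⌋₊ with hi
  set a : ℝ := (i : ℝ) * h with ha
  set b : ℝ := ((i : ℝ) + 1) * h with hb
  have hat : a ≤ t := floor_mul_le hhp ht
  have htb : t < b := lt_floor_add_one_mul hhp
  have hba : b - a = h := by rw [ha, hb]; ring
  have hbt : dist b t < δ := by
    rw [Real.dist_eq, abs_of_nonneg (by linarith)]
    linarith
  have hta : dist a t < δ := by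
    rw [Real.dist_eq, abs_of_nonpos (by linarith)]
    linarith
  have Hb := hδ' hbt
  have Ha := hδ' hta
  rw [dist_eq_norm, dyadic_eq]
  have key : (h⁻¹ • (x b - x a) : EuclideanSpace ℝ (Fin n)) - w =
      h⁻¹ • ((x b - x t - (b - t) • w) - (x a - x t - (a - t) • w)) := by
    have inner : (x b - x t - (b - t) • w) - (x a - x t - (a - t) • w)
        = (x b - x a) - h • w := by
      have h1 : (b - t) - (a - t) = h := by linarith
      rw [← hba]
      module
    rw [inner, smul_sub, smul_sub, smul_smul, inv_mul_cancel₀ hhp.ne', one_smul,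
      smul_sub]
  calc ‖(h⁻¹ • (x b - x a) : EuclideanSpace ℝ (Fin n)) - w‖
      = h⁻¹ * ‖(x b - x t - (b - t) • w) - (x a - x t - (a - t) • w)‖ := by
        rw [key, norm_smul, norm_inv, Real.norm_of_nonneg hhp.le]
    _ ≤ h⁻¹ * (‖x b - x t - (b - t) • w‖ + ‖x a - x t - (a - t) • w‖) := by
        gcongr; exact norm_sub_le _ _
    _ ≤ h⁻¹ * ((ε/2) * ‖b - t‖ + (ε/2) * ‖a - t‖) := by
        gcongr
    _ = h⁻¹ * ((ε/2) * (b - t) + (ε/2) * (t - a)) := by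
        rw [Real.norm_of_nonneg (by linarith), Real.norm_of_nonpos (by linarith)]
        ring_nf
    _ = h⁻¹ * ((ε/2) * h) := by rw [show (ε/2) * (b - t) + (ε/2) * (t - a) = (ε/2) * (b - a) by ring, hba]
    _ = ε / 2 := by field_simp
    _ < ε := by linarith

end

noncomputable section

/-- for a Lipschitz map `x` with a.e. derivative `v` on `[0,T]`,
the dyadic difference quotients converge to `v` in `L²((0,T))`. -/
theorem stmt13 {n : ℕ} (T : ℝ) (hT : 0 < T)
    (x : ℝ → EuclideanSpace ℝ (Fin n)) (L : NNReal)
    (hx : LipschitzOnWith L x (Icc 0 T))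
    (v : ℝ → EuclideanSpace ℝ (Fin n))
    (hderiv : ∀ᵐ t ∂volume, t ∈ Icc (0 : ℝ) T →
      HasDerivWithinAt x (v t) (Icc 0 T) t) :
    Tendsto (fun m => ∫ t in (0 : ℝ)..T, ‖dyadicDiffQuot T x m t - v t‖ ^ 2)
      atTop (𝓝 0) := by
  set μ := volume.restrict (Ioc (0:ℝ) T) with hμ
  have hmeas : ∀ m, Measurable (dyadicDiffQuot T x m) := measurable_dyadicDiffQuot x
  have hne : ∀ᵐ t : ℝ ∂volume, t ≠ T := by
    refine ae_iff.mpr ?_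
    simp [show {t : ℝ | ¬ t ≠ T} = {T} by ext; simp]
  have hIoo : ∀ᵐ t ∂μ, t ∈ Ioo 0 T := by
    filter_upwards [ae_restrict_mem measurableSet_Ioc, ae_restrict_of_ae hne] with t h1 h2
    exact ⟨h1.1, lt_of_le_of_ne h1.2 h2⟩
  have htend : ∀ᵐ t ∂μ, Tendsto (fun m => dyadicDiffQuot T x m t) atTop (𝓝 (v t)) := by
    filter_upwards [hIoo, ae_restrict_of_ae hderiv] with t h1 h2
    have hda : HasDerivAt x (v t) t :=
      (h2 ⟨h1.1.le, h1.2.le⟩).hasDerivAt (Icc_mem_nhds h1.1 h1.2)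
    exact tendsto_dyadic hT h1.1.le hda
  have hvb : ∀ᵐ t ∂μ, ‖v t‖ ≤ L := by
    filter_upwards [hIoo, htend] with t h1 h2
    exact le_of_tendsto h2.norm
      (Eventually.of_forall fun m => norm_dyadic_le hT hx ⟨h1.1.le, h1.2⟩ m)
  have hvm : AEStronglyMeasurable v μ :=
    aestronglyMeasurable_of_tendsto_ae atTop
      (fun m => (hmeas m).aestronglyMeasurable) htend
  have F_meas : ∀ m, AEStronglyMeasurable
      (fun t => ‖dyadicDiffQuot T x m t - v t‖ ^ 2) μ := fun m =>
    (((hmeas m).aestronglyMeasurable.sub hvm).norm).pow 2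
  have bound_int : Integrable (fun _ : ℝ => (2 * (L:ℝ)) ^ 2) μ := by
    have : IntegrableOn (fun _ : ℝ => (2 * (L:ℝ)) ^ 2) (Ioc 0 T) volume :=
      integrableOn_const measure_Ioc_lt_top.ne
    exact this
  have h_bound : ∀ m, ∀ᵐ t ∂μ, ‖‖dyadicDiffQuot T x m t - v t‖ ^ 2‖ ≤ (2 * (L:ℝ)) ^ 2 := by
    intro m
    filter_upwards [hIoo, hvb] with t h1 h2
    have hω : ‖dyadicDiffQuot T x m t‖ ≤ L := norm_dyadic_le hT hx ⟨h1.1.le, h1.2⟩ m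
    have h3 : ‖dyadicDiffQuot T x m t - v t‖ ≤ 2 * (L:ℝ) := by
      calc ‖dyadicDiffQuot T x m t - v t‖
          ≤ ‖dyadicDiffQuot T x m t‖ + ‖v t‖ := norm_sub_le _ _
        _ ≤ 2 * (L:ℝ) := by linarith
    rw [Real.norm_of_nonneg (by positivity)]
    exact pow_le_pow_left₀ (norm_nonneg _) h3 2
  have h_lim : ∀ᵐ t ∂μ, Tendsto (fun m => ‖dyadicDiffQuot T x m t - v t‖ ^ 2)
      atTop (𝓝 0) := by
    filter_upwards [htend] with t h1
    have h2 : Tendsto (fun m => dyadicDiffQuot T x m t - v t) atTop (𝓝 0) := by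
      simpa using h1.sub (tendsto_const_nhds (x := v t))
    simpa using (h2.norm.pow 2)
  have main := tendsto_integral_of_dominated_convergence
    (μ := μ) (f := fun _ : ℝ => (0:ℝ)) _ F_meas bound_int h_bound h_lim
  rw [integral_zero] at main
  simpa [intervalIntegral.integral_of_le hT.le] using main
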